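/- arXiv:2112.03654 — 3 statements merged into one kernel-verified Lean document; each statement's English description precedes it below -/
import Mathlib

section
/- Let z₁, z₂ ∈ ℤ with sharings [z₁] = (z₁⁽¹⁾, z₁⁽²⁾) and [z₂] = (z₂⁽¹⁾, z₂⁽²⁾), and let [α], [β], [γ] be sharings of a Beaver triple with α·β ≡ γ (mod q). Define δ := (z₁⁽¹⁾ - α⁽¹⁾) + (z₁⁽²⁾ - α⁽²⁾) mod q and ε := (z₂⁽¹⁾ - β⁽¹⁾) + (z₂⁽²⁾ - β⁽²⁾) mod q. Define shares z₅⁽¹⁾ := (γ⁽¹⁾ + δ·β⁽¹⁾ + ε·α⁽¹⁾ + δ·ε) mod q and z₅⁽²⁾ := (γ⁽²⁾ + δ·β⁽²⁾ + ε·α⁽²⁾) mod q. Then z₅⁽¹⁾ + z₅⁽²⁾ ≡ z₁·z₂ (mod q). -/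
/-! Reduced to `ZMod q`, the claim is a ring identity: with `δ = x - a` and `ε = y - b` the two
shares add up to `c - a * b + x * y`, and the triple condition `a * b = c` kills the error term. -/

theorem beaver_shares_add_eq_mul {R : Type*} [CommRing R] {x y a b c a₁ a₂ b₁ b₂ c₁ c₂ δ ε : R}
    (ha : a = a₁ + a₂) (hb : b = b₁ + b₂) (hc : c = c₁ + c₂) (habc : a * b = c)
    (hδ : δ = x - a) (hε : ε = y - b) :
    (c₁ + δ * b₁ + ε * a₁ + δ * ε) + (c₂ + δ * b₂ + ε * a₂) = x * y := by
  subst ha hb hc hδ hε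
  linear_combination -habc

theorem stmt_4_general (q : ℕ) (z₁ z₂ α β γ : ℤ)
    (z₁₁ z₁₂ z₂₁ z₂₂ α₁ α₂ β₁ β₂ γ₁ γ₂ : ℤ)
    (hz₁ : z₁ ≡ z₁₁ + z₁₂ [ZMOD q]) (hz₂ : z₂ ≡ z₂₁ + z₂₂ [ZMOD q])
    (hα : α ≡ α₁ + α₂ [ZMOD q]) (hβ : β ≡ β₁ + β₂ [ZMOD q])
    (hγ : γ ≡ γ₁ + γ₂ [ZMOD q]) (hbeaver : α * β ≡ γ [ZMOD q])
    (δ ε : ℤ)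
    (hδ : δ = ((z₁₁ - α₁) + (z₁₂ - α₂)) % q)
    (hε : ε = ((z₂₁ - β₁) + (z₂₂ - β₂)) % q) :
    (γ₁ + δ * β₁ + ε * α₁ + δ * ε) % q + (γ₂ + δ * β₂ + ε * α₂) % q
      ≡ z₁ * z₂ [ZMOD q] := by
  rw [← ZMod.intCast_eq_intCast_iff] at hz₁ hz₂ hα hβ hγ hbeaver ⊢
  apply_fun ((↑) : ℤ → ZMod q) at hδ hε
  push_cast [ZMod.intCast_mod] at *
  refine beaver_shares_add_eq_mul hα hβ hγ hbeaver ?_ ?_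
  · rw [hδ, hz₁, hα]; ring
  · rw [hε, hz₂, hβ]; ring

theorem stmt_4 (q : ℕ) (hq : 0 < q) (z₁ z₂ α β γ : ℤ)
    (z₁₁ z₁₂ z₂₁ z₂₂ α₁ α₂ β₁ β₂ γ₁ γ₂ : ℤ)
    (h₁₁ : 0 ≤ z₁₁ ∧ z₁₁ < q) (h₁₂ : 0 ≤ z₁₂ ∧ z₁₂ < q)
    (h₂₁ : 0 ≤ z₂₁ ∧ z₂₁ < q) (h₂₂ : 0 ≤ z₂₂ ∧ z₂₂ < q)
    (hα₁ : 0 ≤ α₁ ∧ α₁ < q) (hα₂ : 0 ≤ α₂ ∧ α₂ < q)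
    (hβ₁ : 0 ≤ β₁ ∧ β₁ < q) (hβ₂ : 0 ≤ β₂ ∧ β₂ < q)
    (hγ₁ : 0 ≤ γ₁ ∧ γ₁ < q) (hγ₂ : 0 ≤ γ₂ ∧ γ₂ < q)
    (hz₁ : z₁ ≡ z₁₁ + z₁₂ [ZMOD q]) (hz₂ : z₂ ≡ z₂₁ + z₂₂ [ZMOD q])
    (hα : α ≡ α₁ + α₂ [ZMOD q]) (hβ : β ≡ β₁ + β₂ [ZMOD q])
    (hγ : γ ≡ γ₁ + γ₂ [ZMOD q]) (hbeaver : α * β ≡ γ [ZMOD q])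
    (δ ε : ℤ)
    (hδ : δ = ((z₁₁ - α₁) + (z₁₂ - α₂)) % q)
    (hε : ε = ((z₂₁ - β₁) + (z₂₂ - β₂)) % q) :
    (γ₁ + δ * β₁ + ε * α₁ + δ * ε) % q + (γ₂ + δ * β₂ + ε * α₂) % q
      ≡ z₁ * z₂ [ZMOD q] :=
  stmt_4_general q z₁ z₂ α β γ z₁₁ z₁₂ z₂₁ z₂₂ α₁ α₂ β₁ β₂ γ₁ γ₂ hz₁ hz₂ hα hβ hγ hbeaver δ ε hδ hε
end

section
/- Let K, L ∈ ℝ^{p×n}, b, c ∈ ℝ^p, x ∈ ℝⁿ, positive reals s₁, s₂ with s₃ := s₁s₂, and define the integer roundings ξ := ⌊s₁x⌉, 𝒦 := ⌊s₂K⌉, β := ⌊s₃b⌉, ℒ := ⌊s₂L⌉, γ := ⌊s₃c⌉ (componentwise nearest-integer rounding). Let v := 𝒦ξ + β and w := ℒξ + γ. Suppose η > 0 with ‖x‖_∞ ≤ η/(2s₁), ‖K‖_max ≤ η/(2s₂), ‖L‖_max ≤ η/(2s₂). Then |(max{Kx+b} − max{Lx+c}) − (1/s₃)(max{v} − max{w})|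 ≤ (1/s₃)(nη + n/2 + 1). -/
/-- Maximum entry of a vector over `Fin p` (nonempty since `0 < p`). -/
noncomputable def vmax {p : ℕ} (hp : 0 < p) (v : Fin p → ℝ) : ℝ :=
  Finset.univ.sup' ⟨⟨0, hp⟩, Finset.mem_univ _⟩ v

/-- Max-norm (∞-norm) of a vector. -/
noncomputable def infNorm {p : ℕ} (hp : 0 < p) (v : Fin p → ℝ) : ℝ :=
  vmax hp (fun i => |v i|)

/-- Max-norm of a matrix: maximal absolute entry. -/
noncomputable def matMaxNorm {p n : ℕ} (hp : 0 < p) (hn : 0 < n)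
    (M : Matrix (Fin p) (Fin n) ℝ) : ℝ :=
  vmax hp (fun i => infNorm hn (fun j => M i j))

lemma vmax_abs_diff_le {p : ℕ} (hp : 0 < p) (f g : Fin p → ℝ) (E : ℝ)
    (h : ∀ i, |f i - g i| ≤ E) : |vmax hp f - vmax hp g| ≤ E := by
  rw [abs_sub_le_iff]
  constructor
  · have : vmax hp f ≤ vmax hp g + E := by
      apply Finset.sup'_le
      intro i _
      have h1 := (abs_sub_le_iff.mp (h i)).1
      have h2 := Finset.le_sup' g (Finset.mem_univ i)
      unfold vmax; linarith
    linarith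
  · have : vmax hp g ≤ vmax hp f + E := by
      apply Finset.sup'_le
      intro i _
      have h1 := (abs_sub_le_iff.mp (h i)).2
      have h2 := Finset.le_sup' f (Finset.mem_univ i)
      unfold vmax; linarith
    linarith

lemma vmax_mul {p : ℕ} (hp : 0 < p) (s : ℝ) (hs : 0 ≤ s) (f : Fin p → ℝ) :
    vmax hp (fun i => s * f i) = s * vmax hp f := by
  unfold vmax
  exact (Finset.comp_sup'_eq_sup'_comp _ (s * ·) (fun a b => mul_max_of_nonneg a b hs)).symm

theorem stmt_5 (p n : ℕ) (hp : 0 < p) (hn : 0 < n)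
    (K L : Matrix (Fin p) (Fin n) ℝ) (b c : Fin p → ℝ) (x : Fin n → ℝ)
    (s₁ s₂ : ℝ) (hs₁ : 0 < s₁) (hs₂ : 0 < s₂) (s₃ : ℝ) (hs₃ : s₃ = s₁ * s₂)
    (ξ : Fin n → ℤ) (hξ : ∀ j, ξ j = round (s₁ * x j))
    (𝒦 ℒ : Matrix (Fin p) (Fin n) ℤ)
    (h𝒦 : ∀ i j, 𝒦 i j = round (s₂ * K i j)) (hℒ : ∀ i j, ℒ i j = round (s₂ * L i j))
    (β γ : Fin p → ℤ)
    (hβ : ∀ i, β i = round (s₃ * b i)) (hγ : ∀ i, γ i = round (s₃ * c i))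
    (v w : Fin p → ℤ)
    (hv : ∀ i, v i = (∑ j, 𝒦 i j * ξ j) + β i)
    (hw : ∀ i, w i = (∑ j, ℒ i j * ξ j) + γ i)
    (η : ℝ) (hη : 0 < η)
    (hx : infNorm hn x ≤ η / (2 * s₁))
    (hK : matMaxNorm hp hn K ≤ η / (2 * s₂))
    (hL : matMaxNorm hp hn L ≤ η / (2 * s₂)) :
    |(vmax hp (fun i => (∑ j, K i j * x j) + b i)
        - vmax hp (fun i => (∑ j, L i j * x j) + c i))
      - (1 / s₃) * (vmax hp (fun i => (v i : ℝ)) - vmax hp (fun i => (w i : ℝ)))|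
      ≤ (1 / s₃) * ((n : ℝ) * η + (n : ℝ) / 2 + 1) := by
  have hs₃pos : 0 < s₃ := by rw [hs₃]; positivity
  set E : ℝ := (n : ℝ) * (η / 2 + 1 / 4) + 1 / 2 with hE
  -- bounds on x
  have hxj : ∀ j, |s₁ * x j| ≤ η / 2 := by
    intro j
    have h1 : |x j| ≤ η / (2 * s₁) := by
      refine le_trans ?_ hx
      exact Finset.le_sup' (fun j => |x j|) (Finset.mem_univ j)
    rw [abs_mul, abs_of_pos hs₁]
    calc s₁ * |x j| ≤ s₁ * (η / (2 * s₁)) := by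
          exact mul_le_mul_of_nonneg_left h1 hs₁.le
      _ = η / 2 := by field_simp
  have hξj : ∀ j, |(ξ j : ℝ)| ≤ η / 2 + 1 / 2 := by
    intro j
    have h1 : |s₁ * x j - (ξ j : ℝ)| ≤ 1 / 2 := by
      rw [hξ j]; exact abs_sub_round _
    have := hxj j
    calc |(ξ j : ℝ)| = |s₁ * x j - (s₁ * x j - (ξ j : ℝ))| := by ring_nf
      _ ≤ |s₁ * x j| + |s₁ * x j - (ξ j : ℝ)| := abs_sub _ _
      _ ≤ η / 2 + 1 / 2 := by linarith
  -- key row-wise bound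
  have key : ∀ (M : Matrix (Fin p) (Fin n) ℝ) (𝓜 : Matrix (Fin p) (Fin n) ℤ)
      (d : Fin p → ℝ) (δ : Fin p → ℤ) (u : Fin p → ℤ),
      (∀ i j, 𝓜 i j = round (s₂ * M i j)) → (∀ i, δ i = round (s₃ * d i)) →
      (∀ i, u i = (∑ j, 𝓜 i j * ξ j) + δ i) → matMaxNorm hp hn M ≤ η / (2 * s₂) →
      ∀ i, |s₃ * ((∑ j, M i j * x j) + d i) - (u i : ℝ)| ≤ E := by
    intro M 𝓜 d δ u h𝓜 hδ hu hM i
    have hMij : ∀ j, |s₂ * M i j| ≤ η / 2 := by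
      intro j
      have h1 : |M i j| ≤ η / (2 * s₂) := by
        have h2 : |M i j| ≤ infNorm hn (fun j => M i j) :=
          Finset.le_sup' (fun j => |M i j|) (Finset.mem_univ j)
        have h3 : infNorm hn (fun j => M i j) ≤ matMaxNorm hp hn M :=
          Finset.le_sup' (fun i => infNorm hn (fun j => M i j)) (Finset.mem_univ i)
        linarith
      rw [abs_mul, abs_of_pos hs₂]
      calc s₂ * |M i j| ≤ s₂ * (η / (2 * s₂)) := mul_le_mul_of_nonneg_left h1 hs₂.le
        _ = η / 2 := by field_simp
    have term : ∀ j, |(s₂ * M i j) * (s₁ * x j) - (𝓜 i j : ℝ) * (ξ j : ℝ)|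
        ≤ η / 2 + 1 / 4 := by
      intro j
      have hra : |s₂ * M i j - (𝓜 i j : ℝ)| ≤ 1 / 2 := by
        rw [h𝓜 i j]; exact abs_sub_round _
      have hrb : |s₁ * x j - (ξ j : ℝ)| ≤ 1 / 2 := by
        rw [hξ j]; exact abs_sub_round _
      have e : (s₂ * M i j) * (s₁ * x j) - (𝓜 i j : ℝ) * (ξ j : ℝ)
          = (s₂ * M i j) * ((s₁ * x j) - (ξ j : ℝ))
            + ((s₂ * M i j) - (𝓜 i j : ℝ)) * (ξ j : ℝ) := by ring
      rw [e]
      calc |(s₂ * M i j) * ((s₁ * x j) - (ξ j : ℝ))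
            + ((s₂ * M i j) - (𝓜 i j : ℝ)) * (ξ j : ℝ)|
          ≤ |(s₂ * M i j) * ((s₁ * x j) - (ξ j : ℝ))|
            + |((s₂ * M i j) - (𝓜 i j : ℝ)) * (ξ j : ℝ)| := abs_add_le _ _
        _ = |s₂ * M i j| * |s₁ * x j - (ξ j : ℝ)|
            + |s₂ * M i j - (𝓜 i j : ℝ)| * |(ξ j : ℝ)| := by
            rw [abs_mul (s₂ * M i j - (𝓜 i j : ℝ)), abs_mul (s₂ * M i j)]
        _ ≤ (η / 2) * (1 / 2) + (1 / 2) * (η / 2 + 1 / 2) :=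
            add_le_add (mul_le_mul (hMij j) hrb (abs_nonneg _) (by positivity))
              (mul_le_mul hra (hξj j) (abs_nonneg _) (by norm_num))
        _ = η / 2 + 1 / 4 := by ring
    have expand : s₃ * ((∑ j, M i j * x j) + d i) - (u i : ℝ)
        = (∑ j, ((s₂ * M i j) * (s₁ * x j) - (𝓜 i j : ℝ) * (ξ j : ℝ)))
          + (s₃ * d i - (δ i : ℝ)) := by
      rw [hu i]
      push_cast
      rw [Finset.sum_sub_distrib, mul_add, Finset.mul_sum]
      have h1 : ∑ j, s₃ * (M i j * x j) = ∑ j, (s₂ * M i j) * (s₁ * x j) :=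
        Finset.sum_congr rfl (fun j _ => by rw [hs₃]; ring)
      rw [h1]; ring
    have hδi : |s₃ * d i - (δ i : ℝ)| ≤ 1 / 2 := by
      rw [hδ i]; exact abs_sub_round _
    rw [expand]
    calc |(∑ j, ((s₂ * M i j) * (s₁ * x j) - (𝓜 i j : ℝ) * (ξ j : ℝ)))
          + (s₃ * d i - (δ i : ℝ))|
        ≤ |∑ j, ((s₂ * M i j) * (s₁ * x j) - (𝓜 i j : ℝ) * (ξ j : ℝ))|
          + |s₃ * d i - (δ i : ℝ)| := abs_add_le _ _
      _ ≤ (∑ j, |(s₂ * M i j) * (s₁ * x j) - (𝓜 i j : ℝ) * (ξ j : ℝ)|)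
          + |s₃ * d i - (δ i : ℝ)| := by
          gcongr; exact Finset.abs_sum_le_sum_abs _ _
      _ ≤ (∑ _j : Fin n, (η / 2 + 1 / 4)) + 1 / 2 :=
          add_le_add (Finset.sum_le_sum (fun j _ => term j)) hδi
      _ = E := by
          rw [Finset.sum_const, Finset.card_univ, Fintype.card_fin, nsmul_eq_mul, hE]
  have hKrow := key K 𝒦 b β v h𝒦 hβ hv hK
  have hLrow := key L ℒ c γ w hℒ hγ hw hL
  set A := vmax hp (fun i => (∑ j, K i j * x j) + b i) with hA
  set B := vmax hp (fun i => (∑ j, L i j * x j) + c i) with hB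
  set V := vmax hp (fun i => (v i : ℝ)) with hV
  set W := vmax hp (fun i => (w i : ℝ)) with hW
  have h1 : |s₃ * A - V| ≤ E := by
    rw [hA, ← vmax_mul hp s₃ hs₃pos.le]
    exact vmax_abs_diff_le hp _ _ E hKrow
  have h2 : |s₃ * B - W| ≤ E := by
    rw [hB, ← vmax_mul hp s₃ hs₃pos.le]
    exact vmax_abs_diff_le hp _ _ E hLrow
  have eq : (A - B) - (1 / s₃) * (V - W)
      = (1 / s₃) * ((s₃ * A - V) - (s₃ * B - W)) := by
    field_simp; ring
  rw [eq, abs_mul, abs_of_pos (by positivity : (0:ℝ) < 1 / s₃)]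
  have h3 : |(s₃ * A - V) - (s₃ * B - W)| ≤ E + E :=
    le_trans (abs_sub _ _) (by gcongr)
  calc (1 / s₃) * |(s₃ * A - V) - (s₃ * B - W)| ≤ (1 / s₃) * (E + E) := by gcongr
    _ = (1 / s₃) * ((n : ℝ) * η + (n : ℝ) / 2 + 1) := by rw [hE]; ring
end

section
/- Let q ∈ ℕ₊, r₁, r₂ ∈ {0,...,q−1}, and let M_v, M_w ∈ ℤ with M_v − M_w ∈ {-⌊q/2⌋,...,⌈q/2⌉−1}. Define ν := (M_v + r₁) mod q, ω := (M_w + r₂) mod q, Δν := (ν + r₂) mod q, and Δω := (ω + r₁) mod q. Then μ((Δν − Δω) mod q) = M_v − M_w, where μ(z) = z − q if z ≥ q/2 and μ(z) = z otherwise. -/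
/-- The centered representative map: `μ(z) = z - q` if `z ≥ q/2`, else `z`. -/
def mu (q : ℕ) (z : ℤ) : ℤ := if (q : ℤ) ≤ 2 * z then z - q else z

theorem stmt_17 (q : ℕ) (hq : 0 < q) (r₁ r₂ : ℤ)
    (hr₁ : 0 ≤ r₁ ∧ r₁ < q) (hr₂ : 0 ≤ r₂ ∧ r₂ < q)
    (Mv Mw : ℤ)
    (hM : -((q : ℤ) / 2) ≤ Mv - Mw ∧ Mv - Mw ≤ ((q : ℤ) + 1) / 2 - 1)
    (ν ω Δν Δω : ℤ)
    (hν : ν = (Mv + r₁) % q) (hω : ω = (Mw + r₂) % q)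
    (hΔν : Δν = (ν + r₂) % q) (hΔω : Δω = (ω + r₁) % q) :
    mu q ((Δν - Δω) % q) = Mv - Mw := by
  subst hΔν hΔω hν hω
  have hmod : ∀ a : ℤ, a % q ≡ a [ZMOD q] := fun a => Int.emod_emod_of_dvd a dvd_rfl
  have hA : (((Mv + r₁) % q + r₂) % q - ((Mw + r₂) % q + r₁) % q) ≡ Mv - Mw [ZMOD q] := by
    have h1 : ((Mv + r₁) % q + r₂) % q ≡ Mv + r₁ + r₂ [ZMOD q] :=
      (hmod _).trans ((hmod (Mv + r₁)).add_right r₂)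
    have h2 : ((Mw + r₂) % q + r₁) % q ≡ Mw + r₂ + r₁ [ZMOD q] :=
      (hmod _).trans ((hmod (Mw + r₂)).add_right r₁)
    have := h1.sub h2
    have heq : Mv + r₁ + r₂ - (Mw + r₂ + r₁) = Mv - Mw := by ring
    rwa [heq] at this
  have key : (((Mv + r₁) % q + r₂) % q - ((Mw + r₂) % q + r₁) % q) % q = (Mv - Mw) % q := hA
  rw [key, mu]
  set d := Mv - Mw with hd
  rcases le_or_gt 0 d with h | h
  · have hz : d % q = d := Int.emod_eq_of_lt h (by omega)
    rw [hz]; split <;> omega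
  · have hz : d % q = d + q := by
      rw [show d % (q:ℤ) = (d + q) % q from (Int.add_mul_emod_self_right d 1 (q:ℤ)).symm ▸ by rw [one_mul]]
      exact Int.emod_eq_of_lt (by omega) (by omega)
    rw [hz]; split <;> omega
end
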